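/- Define Φ_ν(q) = ∑_{n=1}^∞ n^ν q^n/(1−q^n) for |q| < 1, Q(q) = 1 + 240·Φ₃(q), and R(q) = 1 − 504·Φ₅(q). Then Φ₁₁(q) = (−691 + 441·Q(q)³ + 250·R(q)²)/65520. -/

import Mathlib

/-!
Writing `q = exp (2πiz)` with `z` in the upper half plane, the Lambert series `Φ_ν(q)` is
`∑ σ_ν(n) qⁿ`, so `Q`, `R` and `1 + (65520/691) Φ₁₁` are the normalised Eisenstein series
`E₄`, `E₆`, `E₁₂`. The level-one form `441 E₄³ + 250 E₆² - 691 E₁₂` of weight 12 has vanishing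
q-expansion coefficients in degrees 0 and 1, hence is zero by the Sturm bound. The point `q = 0`,
which is not of the form `exp (2πiz)`, is checked directly.
-/

/-- Lambert-type Eisenstein series Φ_ν(q) = ∑_{n=1}^∞ n^ν q^n/(1−q^n). -/
noncomputable def Phi (ν : ℕ) (q : ℂ) : ℂ :=
  ∑' n : ℕ, ((n : ℂ) + 1) ^ ν * q ^ (n + 1) / (1 - q ^ (n + 1))

open ModularForm ModularFormClass EisensteinSeries Complex
open UpperHalfPlane hiding I
open scoped ArithmeticFunction.sigma Real MatrixGroups

lemma Phi_zero (ν : ℕ) : Phi ν 0 = 0 := by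
  simp [Phi]

theorem Phi_eq_tsum_sigma (ν : ℕ) {q : ℂ} (hq : ‖q‖ < 1) :
    Phi ν q = ∑' n : ℕ+, σ ν n * q ^ (n : ℕ) := by
  rw [Phi, ← tsum_pow_div_one_sub_eq_tsum_sigma hq,
    tsum_pnat_eq_tsum_succ (f := fun n : ℕ ↦ (n : ℂ) ^ ν * q ^ n / (1 - q ^ n))]
  push_cast
  rfl

theorem exists_cexp_two_pi_I_mul_eq {q : ℂ} (hq0 : q ≠ 0) (hq : ‖q‖ < 1) :
    ∃ z : ℍ, cexp (2 * π * I * z) = q :=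
  ⟨⟨_, Function.Periodic.im_invQParam_pos_of_norm_lt_one one_pos hq hq0⟩, by
    simpa [Function.Periodic.qParam] using Function.Periodic.qParam_right_inv one_ne_zero hq0⟩

theorem E_eq_one_sub_mul_Phi {k : ℕ} (hk : 3 ≤ k) (hk2 : Even k) (z : ℍ) :
    E hk z = 1 - 2 * k / bernoulli k * Phi (k - 1) (cexp (2 * π * I * z)) := by
  simp_rw [q_expansion_bernoulli hk hk2 z, Phi_eq_tsum_sigma _ (norm_exp_two_pi_I_lt_one z),
    zpow_natCast]

lemma bernoulli_twelve : bernoulli 12 = -691 / 2730 := by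
  decide +kernel

noncomputable abbrev E₁₂ : ModularForm 𝒮ℒ 12 := E (k := 12) (by norm_num)

theorem E₄_eq_one_add_mul_Phi (z : ℍ) : E₄ z = 1 + 240 * Phi 3 (cexp (2 * π * I * z)) := by
  rw [E_eq_one_sub_mul_Phi _ ⟨2, rfl⟩, show bernoulli 4 = -1 / 30 by decide +kernel]
  norm_num

theorem E₆_eq_one_sub_mul_Phi (z : ℍ) : E₆ z = 1 - 504 * Phi 5 (cexp (2 * π * I * z)) := by
  rw [E_eq_one_sub_mul_Phi _ ⟨3, rfl⟩, show bernoulli 6 = 1 / 42 by decide +kernel]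
  norm_num

theorem E₁₂_eq_one_add_mul_Phi (z : ℍ) :
    E₁₂ z = 1 + 65520 / 691 * Phi 11 (cexp (2 * π * I * z)) := by
  rw [E_eq_one_sub_mul_Phi _ ⟨6, rfl⟩, bernoulli_twelve]
  norm_num

theorem E₁₂_qExpansion_coeff_one : (qExpansion 1 E₁₂).coeff 1 = 65520 / 691 := by
  norm_num [E_qExpansion_coeff _ ⟨6, rfl⟩, bernoulli_twelve]

noncomputable def E₁₂RelationForm : ModularForm 𝒮ℒ 12 :=
  (441 : ℂ) • mcast (by norm_num) (E₄.pow 3) + (250 : ℂ) • mcast (by norm_num) (E₆.pow 2)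
    - (691 : ℂ) • E₁₂

lemma E₁₂RelationForm_apply (z : ℍ) :
    E₁₂RelationForm z = 441 * E₄ z ^ 3 + 250 * E₆ z ^ 2 - 691 * E₁₂ z := by
  simp only [E₁₂RelationForm, FunLike.coe_sub, FunLike.coe_add, FunLike.coe_smul, coe_mcast,
    coe_pow, Pi.sub_apply, Pi.add_apply, Pi.smul_apply, Pi.pow_apply, smul_eq_mul]

lemma E₁₂RelationForm_qExpansion :
    qExpansion 1 E₁₂RelationForm = (441 : ℂ) • qExpansion 1 E₄ ^ 3 +
      (250 : ℂ) • qExpansion 1 E₆ ^ 2 - (691 : ℂ) • qExpansion 1 E₁₂ := by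
  have hΓ := one_mem_strictPeriods_SL
  rw [E₁₂RelationForm, FunLike.coe_sub, ModularForm.qExpansion_sub one_pos hΓ,
    FunLike.coe_add, ModularForm.qExpansion_add one_pos hΓ]
  simp only [FunLike.coe_smul, ModularForm.qExpansion_smul one_pos hΓ,
    ModularForm.qExpansion_mcast, ModularForm.qExpansion_pow one_pos hΓ]

lemma E₁₂RelationForm_eq_zero : E₁₂RelationForm = 0 := by
  have hE₄ : (qExpansion 1 E₄).coeff 0 = 1 := E_qExpansion_coeff_zero _ ⟨2, rfl⟩
  have hE₆ : (qExpansion 1 E₆).coeff 0 = 1 := E_qExpansion_coeff_zero _ ⟨3, rfl⟩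
  have hE₁₂ : (qExpansion 1 E₁₂).coeff 0 = 1 := E_qExpansion_coeff_zero _ ⟨6, rfl⟩
  have hcoeff : ∀ i < 2, (qExpansion 1 E₁₂RelationForm).coeff i = 0 := by
    intro i hi
    interval_cases i <;>
    · norm_num [E₁₂RelationForm_qExpansion, PowerSeries.coeff_mul, pow_succ,
        Finset.Nat.antidiagonal_succ, E₄_qExpansion_coeff_one, E₆_qExpansion_coeff_one,
        E₁₂_qExpansion_coeff_one, hE₄, hE₆, hE₁₂, -PowerSeries.coeff_zero_eq_constantCoeff]
  refine sturm_bound_levelOne (lt_of_lt_of_le ?_ (PowerSeries.nat_le_order _ 2 hcoeff))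
  decide

theorem E₁₂_eq_E₄_cube_add_E₆_sq (z : ℍ) : 691 * E₁₂ z = 441 * E₄ z ^ 3 + 250 * E₆ z ^ 2 := by
  have h := E₁₂RelationForm_apply z
  rw [E₁₂RelationForm_eq_zero, zero_apply] at h
  linear_combination h

/-- With Q = 1 + 240Φ₃ and R = 1 − 504Φ₅,
Φ₁₁ = (−691 + 441Q³ + 250R²)/65520 for |q| < 1. -/
theorem Phi11_eval (q : ℂ) (hq : ‖q‖ < 1) :
    Phi 11 q = (-691 + 441 * (1 + 240 * Phi 3 q) ^ 3 + 250 * (1 - 504 * Phi 5 q) ^ 2) / 65520 := by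
  rcases eq_or_ne q 0 with rfl | hq0
  · norm_num [Phi_zero]
  obtain ⟨z, rfl⟩ := exists_cexp_two_pi_I_mul_eq hq0 hq
  have h := E₁₂_eq_E₄_cube_add_E₆_sq z
  rw [E₄_eq_one_add_mul_Phi, E₆_eq_one_sub_mul_Phi, E₁₂_eq_one_add_mul_Phi] at h
  linear_combination h / 65520
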